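/- If Y ∈ ℝ^{n×p} is a spurious 2-critical point of (BM), then C lies in the set Sⁿ_{n−p} + 𝓛; explicitly, there exists λ ∈ ℝᵐ, vanishing outside the attainable index set I(Y), such that the matrix C − Σᵢ λᵢ Aᵢ has rank at most n − p. -/

import Mathlib

open Matrix MeasureTheory

noncomputable section

/-- The `k`-th triangular number `τ(k) = k(k+1)/2`. -/
def tau (k : ℕ) : ℕ := k * (k + 1) / 2

/-- The space `Sⁿ` of symmetric `n × n` real matrices, as a submodule of all matrices. -/
def SymMat (n : ℕ) : Submodule ℝ (Matrix (Fin n) (Fin n) ℝ) where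
  carrier := {A | A.IsSymm}
  add_mem' := fun ha hb => ha.add hb
  zero_mem' := by simp [Matrix.IsSymm]
  smul_mem' := fun c A hA => hA.smul c

instance (n : ℕ) : MeasurableSpace (Matrix (Fin n) (Fin n) ℝ) := borel _
instance (n : ℕ) : BorelSpace (Matrix (Fin n) (Fin n) ℝ) := ⟨rfl⟩
instance (n : ℕ) : MeasurableSpace (SymMat n) := borel _
instance (n : ℕ) : BorelSpace (SymMat n) := ⟨rfl⟩

/-- The feasible set `𝒳` of the SDP: `X` PSD, `tr(AᵢX) = bᵢ` for `i < m₁` (equalities),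
`tr(AᵢX) ≥ bᵢ` for the remaining indices (inequalities). -/
def Feas (n m m₁ : ℕ) (A : Fin m → Matrix (Fin n) (Fin n) ℝ) (b : Fin m → ℝ) :
    Set (Matrix (Fin n) (Fin n) ℝ) :=
  {X | X.PosSemidef ∧ ∀ i : Fin m,
      if (i : ℕ) < m₁ then (A i * X).trace = b i else b i ≤ (A i * X).trace}

/-- The slack matrix `S(λ) = C - Σᵢ λᵢ Aᵢ`. -/
def Slack {n m : ℕ} (C : Matrix (Fin n) (Fin n) ℝ) (A : Fin m → Matrix (Fin n) (Fin n) ℝ)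
    (lam : Fin m → ℝ) : Matrix (Fin n) (Fin n) ℝ :=
  C - ∑ i, lam i • A i

/-- `Y` is 1st-order critical for (BM) with multiplier `λ`. -/
def IsCrit1 (n p m m₁ : ℕ) (C : Matrix (Fin n) (Fin n) ℝ)
    (A : Fin m → Matrix (Fin n) (Fin n) ℝ) (b : Fin m → ℝ)
    (Y : Matrix (Fin n) (Fin p) ℝ) (lam : Fin m → ℝ) : Prop :=
  Y * Yᵀ ∈ Feas n m m₁ A b ∧
  (∀ i : Fin m, m₁ ≤ (i : ℕ) → 0 ≤ lam i) ∧
  (∀ i : Fin m, (A i * (Y * Yᵀ)).trace ≠ b i → lam i = 0) ∧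
  Slack C A lam * Y = 0

/-- `Y` is 2nd-order critical for (BM) with multiplier `λ`. -/
def IsCrit2 (n p m m₁ : ℕ) (C : Matrix (Fin n) (Fin n) ℝ)
    (A : Fin m → Matrix (Fin n) (Fin n) ℝ) (b : Fin m → ℝ)
    (Y : Matrix (Fin n) (Fin p) ℝ) (lam : Fin m → ℝ) : Prop :=
  IsCrit1 n p m m₁ C A b Y lam ∧
  ∀ U : Matrix (Fin n) (Fin p) ℝ,
    (∀ i : Fin m, (A i * (Y * Yᵀ)).trace = b i → (A i * (U * Yᵀ)).trace = 0) →
    0 ≤ (Slack C A lam * (U * Uᵀ)).trace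

/-- `X` is an optimal solution of (SDP). -/
def IsOptimal (n m m₁ : ℕ) (C : Matrix (Fin n) (Fin n) ℝ)
    (A : Fin m → Matrix (Fin n) (Fin n) ℝ) (b : Fin m → ℝ)
    (X : Matrix (Fin n) (Fin n) ℝ) : Prop :=
  X ∈ Feas n m m₁ A b ∧ ∀ X' ∈ Feas n m m₁ A b, (C * X).trace ≤ (C * X').trace

/-!
Let `λ` be the multiplier of the 2-critical point `Y` and `S = S(λ)`. Since `S Y = 0`, we have
`rank S + rank Y ≤ n`, so if `rank S > n - p` then `Y` has a nonzero kernel vector `z`. Every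
`U = u zᵀ` then satisfies `U Yᵀ = 0`, and the second-order condition gives `‖z‖² uᵀ S u ≥ 0`,
so the quadratic form of `S` is nonnegative. Together with `S Y = 0`, feasibility, the sign
conditions and complementary slackness, `λ` is then a dual certificate proving that `Y Yᵀ` is
optimal for (SDP).
-/

namespace Matrix

variable {m n p : Type*} [Fintype n]

lemma exists_mulVec_eq_zero_of_rank_lt {K : Type*} [Field K] (Y : Matrix m n K)
    (h : Y.rank < Fintype.card n) : ∃ z ≠ 0, Y *ᵥ z = 0 := by
  by_contra! hker
  have hinj : Function.Injective Y.mulVecLin := by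
    rw [← LinearMap.ker_eq_bot, Submodule.eq_bot_iff]
    exact fun z hz => by_contra fun hz0 => hker z hz0 hz
  rw [rank, LinearMap.finrank_range_of_inj hinj, Module.finrank_fintype_fun_eq_card] at h
  exact h.false

lemma trace_mul_nonneg_of_dotProduct_mulVec_nonneg {S X : Matrix n n ℝ}
    (hS : ∀ u, 0 ≤ u ⬝ᵥ S *ᵥ u) (hX : X.PosSemidef) : 0 ≤ (S * X).trace := by
  classical
  open scoped MatrixOrder in
  obtain ⟨B, rfl⟩ := CStarAlgebra.nonneg_iff_eq_star_mul_self.mp hX.nonneg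
  rw [← Matrix.mul_assoc, trace_mul_cycle]
  exact Finset.sum_nonneg fun k _ => by
    simpa [mul_mul_apply, star_eq_conjTranspose] using hS (B k)

lemma dotProduct_mulVec_nonneg_of_trace_mul_nonneg [Fintype p]
    {S : Matrix n n ℝ} {Y : Matrix n p ℝ}
    (hS : ∀ U : Matrix n p ℝ, U * Yᵀ = 0 → 0 ≤ (S * (U * Uᵀ)).trace)
    {z : p → ℝ} (hz : z ≠ 0) (hYz : Y *ᵥ z = 0) (u : n → ℝ) : 0 ≤ u ⬝ᵥ S *ᵥ u := by
  have hU : vecMulVec u z * Yᵀ = 0 := by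
    rw [vecMulVec_mul, vecMul_transpose, hYz, vecMulVec_zero]
  have htrace : (S * (vecMulVec u z * (vecMulVec u z)ᵀ)).trace
      = (z ⬝ᵥ z) * (u ⬝ᵥ S *ᵥ u) := by
    rw [transpose_vecMulVec, vecMulVec_mul_vecMulVec, mul_vecMulVec, trace_vecMulVec,
      dotProduct_smul, smul_eq_mul, dotProduct_comm (S *ᵥ u)]
  have hzz : 0 < z ⬝ᵥ z := by simpa using dotProduct_star_self_pos_iff.mpr hz
  exact (mul_nonneg_iff_of_pos_left hzz).mp (htrace ▸ hS _ hU)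

end Matrix

section Duality

variable {n m m₁ : ℕ} {A : Fin m → Matrix (Fin n) (Fin n) ℝ} {b : Fin m → ℝ}
  {C : Matrix (Fin n) (Fin n) ℝ} {lam : Fin m → ℝ}

lemma trace_mul_eq_trace_slack_mul_add (X : Matrix (Fin n) (Fin n) ℝ) :
    (C * X).trace = (Slack C A lam * X).trace + ∑ i, lam i * (A i * X).trace := by
  simp only [Slack, Matrix.sub_mul, Matrix.sum_mul, Matrix.smul_mul, trace_sub, trace_sum,
    trace_smul, smul_eq_mul, sub_add_cancel]

lemma sum_mul_trace_le_of_mem_feas {X X' : Matrix (Fin n) (Fin n) ℝ}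
    (hpos : ∀ i : Fin m, m₁ ≤ (i : ℕ) → 0 ≤ lam i)
    (hcomp : ∀ i, (A i * X).trace ≠ b i → lam i = 0) (hX' : X' ∈ Feas n m m₁ A b) :
    ∑ i, lam i * (A i * X).trace ≤ ∑ i, lam i * (A i * X').trace := by
  refine Finset.sum_le_sum fun i _ => ?_
  by_cases hact : (A i * X).trace = b i
  · have hX'i := hX'.2 i
    split_ifs at hX'i with hi
    · rw [hact, hX'i]
    · rw [hact]
      exact mul_le_mul_of_nonneg_left hX'i (hpos i (not_lt.mp hi))
  · simp [hcomp i hact]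

theorem isOptimal_of_dual_certificate {X : Matrix (Fin n) (Fin n) ℝ}
    (hX : X ∈ Feas n m m₁ A b) (hpos : ∀ i : Fin m, m₁ ≤ (i : ℕ) → 0 ≤ lam i)
    (hcomp : ∀ i, (A i * X).trace ≠ b i → lam i = 0)
    (hS : ∀ u, 0 ≤ u ⬝ᵥ Slack C A lam *ᵥ u) (hSX : (Slack C A lam * X).trace = 0) :
    IsOptimal n m m₁ C A b X := by
  refine ⟨hX, fun X' hX' => ?_⟩
  rw [trace_mul_eq_trace_slack_mul_add (lam := lam) X,
    trace_mul_eq_trace_slack_mul_add (lam := lam) X', hSX]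
  have hdual := sum_mul_trace_le_of_mem_feas hpos hcomp hX'
  have hslack := trace_mul_nonneg_of_dotProduct_mulVec_nonneg hS hX'.1
  linarith

end Duality

theorem spurious_implies_cost_in_bad_set_general
    (n p m m₁ : ℕ)
    (A : Fin m → Matrix (Fin n) (Fin n) ℝ)
    (b : Fin m → ℝ)
    (C : Matrix (Fin n) (Fin n) ℝ)
    (Y : Matrix (Fin n) (Fin p) ℝ)
    (hcrit : ∃ lam : Fin m → ℝ, IsCrit2 n p m m₁ C A b Y lam)
    (hspur : ¬ IsOptimal n m m₁ C A b (Y * Yᵀ)) :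
    ∃ lam : Fin m → ℝ,
      (∀ i : Fin m, (A i * (Y * Yᵀ)).trace ≠ b i → lam i = 0) ∧
      ((Slack C A lam).rank : ℤ) ≤ (n : ℤ) - (p : ℤ) := by
  obtain ⟨lam, ⟨hfeas, hpos, hcomp, hSY⟩, hsecond⟩ := hcrit
  refine ⟨lam, hcomp, ?_⟩
  by_contra! hrank
  have hYrank : Y.rank < Fintype.card (Fin p) := by
    have := rank_add_rank_le_card_of_mul_eq_zero hSY
    simp only [Fintype.card_fin] at this ⊢
    omega
  obtain ⟨z, hz, hYz⟩ := exists_mulVec_eq_zero_of_rank_lt Y hYrank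
  have hS : ∀ u, 0 ≤ u ⬝ᵥ Slack C A lam *ᵥ u :=
    dotProduct_mulVec_nonneg_of_trace_mul_nonneg
      (fun U hU => hsecond U fun i _ => by rw [hU, Matrix.mul_zero, trace_zero]) hz hYz
  refine hspur (isOptimal_of_dual_certificate hfeas hpos hcomp hS ?_)
  rw [← Matrix.mul_assoc, hSY, Matrix.zero_mul, trace_zero]

/-- If `Y` is a spurious 2-critical point of (BM), then `C ∈ Sⁿ_{n-p} + 𝓛`:
there is a multiplier `λ`, vanishing outside the (attainable) active set `I(Y)`,
such that `C - Σᵢ λᵢ Aᵢ` has rank at most `n - p`. -/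
theorem spurious_implies_cost_in_bad_set
    (n p m m₁ : ℕ)
    (A : Fin m → Matrix (Fin n) (Fin n) ℝ) (hA : ∀ i, (A i).IsSymm)
    (b : Fin m → ℝ)
    (C : Matrix (Fin n) (Fin n) ℝ) (hC : C.IsSymm)
    (Y : Matrix (Fin n) (Fin p) ℝ)
    (hcrit : ∃ lam : Fin m → ℝ, IsCrit2 n p m m₁ C A b Y lam)
    (hspur : ¬ IsOptimal n m m₁ C A b (Y * Yᵀ)) :
    ∃ lam : Fin m → ℝ,
      (∀ i : Fin m, (A i * (Y * Yᵀ)).trace ≠ b i → lam i = 0) ∧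
      ((Slack C A lam).rank : ℤ) ≤ (n : ℤ) - (p : ℤ) :=
  spurious_implies_cost_in_bad_set_general n p m m₁ A b C Y hcrit hspur
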